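/- arXiv:2002.12363 — 2 statements merged into one kernel-verified Lean document; each statement's English description precedes it below -/
import Mathlib

section
/- Completion-of-squares identity for the social cost (deterministic finite-horizon version, N agents): suppose P(t), Π(t) are symmetric matrix functions solving the differential Riccati equations ρP = Ṗ + AᵀP + PA + Q − PBR⁻¹BᵀP with P(T)=0 and ρΠ = Π̇ + (A+G)ᵀΠ + Π(A+G) − ΠBR⁻¹BᵀΠ + (I−Γ)ᵀQ(I−Γ) with Π(T)=0. Let y_i solve ẏ_i = A y_i + G y⁽ᴺ⁾ + B u_i, y_i(0)=0, with y⁽ᴺ⁾ = (1/N)∑ y_j. Then ∑_{i=1}^N ∫₀^T e^{−ρt}(‖y_i − Γy⁽ᴺ⁾‖²_Q + ‖u_i‖²_R) dt = ∑_{i=1}^N ∫₀^T e^{−ρt}(‖u_i − u⁽ᴺ⁾ + R⁻¹BᵀP(y_i − y⁽ᴺ⁾)‖²_R + ‖u⁽ᴺ⁾ + R⁻¹BᵀΠ y⁽ᴺ⁾‖²_R) dt. -/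
attribute [local instance] Matrix.normedAddCommGroup Matrix.normedSpace

open Matrix MeasureTheory intervalIntegral BigOperators

/-! With `e i = y i - yN` and `v i = u i - uN`, the deviations obey `ė = A e + B v` and the mean
obeys `ẏN = (A + G) yN + B uN`. Along any trajectory `ẋ = A x + B s`, the Riccati equation for `P`
turns `d/dt (e^{-ρt} xᵀ P x)` into `e^{-ρt} (‖s + R⁻¹ Bᵀ P x‖²_R - ‖x‖²_Q - ‖s‖²_R)`. Apply this to
each `e i` with `P`, and to `yN` with `Π` and the weight `(1 - Γ)ᵀ Q (1 - Γ)`. Since the deviations sum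
to zero, the running cost splits into deviation and mean parts,
`∑ ‖y i - Γ yN‖²_Q = ∑ ‖e i‖²_Q + N ‖(1 - Γ) yN‖²_Q`, and likewise for `u`. Hence the difference of
the two integrands is the derivative of `V = e^{-ρt} (∑ (e i)ᵀ P e i + N yNᵀ Π yN)`, which vanishes
at `0` because `y i 0 = 0` and at `T` because `P T = Π T = 0`. -/

section Calculus

variable {𝕜 : Type*} [NontriviallyNormedField 𝕜] {m k : Type*} [Fintype k] {t : 𝕜}

theorem HasDerivAt.dotProduct {f g : 𝕜 → k → 𝕜} {f' g' : k → 𝕜}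
    (hf : HasDerivAt f f' t) (hg : HasDerivAt g g' t) :
    HasDerivAt (fun s => f s ⬝ᵥ g s) (f' ⬝ᵥ g t + f t ⬝ᵥ g') t := by
  have := HasDerivAt.fun_sum (u := Finset.univ) fun i _ =>
    (hasDerivAt_pi.1 hf i).fun_mul (hasDerivAt_pi.1 hg i)
  rwa [Finset.sum_add_distrib] at this

theorem HasDerivAt.matrix_mulVec {M : 𝕜 → Matrix m k 𝕜} {M' : Matrix m k 𝕜}
    {f : 𝕜 → k → 𝕜} {f' : k → 𝕜} (hM : HasDerivAt M M' t) (hf : HasDerivAt f f' t) :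
    HasDerivAt (fun s => M s *ᵥ f s) (M' *ᵥ f t + M t *ᵥ f') t :=
  hasDerivAt_pi.2 fun i => (hasDerivAt_pi.1 hM i).dotProduct hf

end Calculus

theorem sum_sub_inv_card_smul_sum_eq_zero {ι 𝕜 E : Type*} [Fintype ι] [DivisionRing 𝕜]
    [CharZero 𝕜] [AddCommGroup E] [Module 𝕜 E] (f : ι → E) :
    ∑ i, (f i - (Fintype.card ι : 𝕜)⁻¹ • ∑ j, f j) = 0 := by
  rw [Finset.sum_sub_distrib, Finset.sum_const, Finset.card_univ, ← Nat.cast_smul_eq_nsmul 𝕜,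
    smul_smul, sub_eq_zero]
  rcases isEmpty_or_nonempty ι with hι | hι
  · simp
  · rw [mul_inv_cancel₀ (by simp), one_smul]

theorem sum_quadForm_add_of_sum_eq_zero {m ι α : Type*} [Fintype m] [CommSemiring α]
    (M : Matrix m m α) (s : Finset ι) (d : ι → m → α) (hd : ∑ i ∈ s, d i = 0) (w : m → α) :
    ∑ i ∈ s, (d i + w) ⬝ᵥ M *ᵥ (d i + w) = ∑ i ∈ s, d i ⬝ᵥ M *ᵥ d i + s.card • (w ⬝ᵥ M *ᵥ w) := by
  simp only [mulVec_add, dotProduct_add, add_dotProduct, Finset.sum_add_distrib,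
    ← sum_dotProduct, ← mulVec_sum, ← dotProduct_sum, hd, zero_dotProduct, mulVec_zero,
    dotProduct_zero, Finset.sum_const, smul_dotProduct, add_zero, zero_add]

theorem mulVec_dotProduct {m k α : Type*} [Fintype m] [Fintype k] [CommSemiring α]
    (M : Matrix m k α) (v : k → α) (c : m → α) : M *ᵥ v ⬝ᵥ c = v ⬝ᵥ Mᵀ *ᵥ c :=
  (dotProduct_comm _ _).trans (dotProduct_transpose_mulVec M v c).symm

theorem riccati_completion_of_squares {m k α : Type*} [Fintype m] [Fintype k] [DecidableEq k]
    [CommRing α] {ρ : α} {A Q P P' : Matrix m m α} {B : Matrix m k α} {R : Matrix k k α}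
    (hR : IsUnit R.det) (hRs : R.IsSymm) (hP : P.IsSymm)
    (hric : ρ • P = P' + Aᵀ * P + P * A + Q - P * B * R⁻¹ * Bᵀ * P) (x : m → α) (s : k → α) :
    (A *ᵥ x + B *ᵥ s) ⬝ᵥ P *ᵥ x + x ⬝ᵥ P' *ᵥ x + x ⬝ᵥ P *ᵥ (A *ᵥ x + B *ᵥ s) - ρ * (x ⬝ᵥ P *ᵥ x)
      = (s + (R⁻¹ * Bᵀ * P) *ᵥ x) ⬝ᵥ R *ᵥ (s + (R⁻¹ * Bᵀ * P) *ᵥ x)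
        - (x ⬝ᵥ Q *ᵥ x + s ⬝ᵥ R *ᵥ s) := by
  have hP' : P' = ρ • P - Aᵀ * P - P * A - Q + P * B * R⁻¹ * Bᵀ * P := by
    rw [hric]; abel
  have hRinv : R⁻¹ᵀ = R⁻¹ := by rw [transpose_nonsing_inv, hRs.eq]
  have hRR : ∀ Z : Matrix k m α, R * (R⁻¹ * Z) = Z := fun Z => by
    rw [← Matrix.mul_assoc, mul_nonsing_inv R hR, Matrix.one_mul]
  have hswap : ∀ (M : Matrix m k α), x ⬝ᵥ M *ᵥ s = s ⬝ᵥ Mᵀ *ᵥ x := fun M => by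
    rw [dotProduct_transpose_mulVec]
  rw [hP']
  simp only [add_mulVec, sub_mulVec, smul_mulVec, mulVec_add, mulVec_mulVec, dotProduct_add,
    add_dotProduct, dotProduct_sub, dotProduct_smul, smul_eq_mul, mulVec_dotProduct, transpose_mul,
    transpose_transpose, hP.eq, hRinv, Matrix.mul_assoc, hRR, nonsing_inv_mul R hR, Matrix.mul_one,
    hswap]
  ring

theorem hasDerivAt_discounted_quadForm_of_riccati {m k : Type*} [Fintype m] [Fintype k]
    [DecidableEq k] {ρ t : ℝ} {A Q P' : Matrix m m ℝ} {B : Matrix m k ℝ} {R : Matrix k k ℝ}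
    {P : ℝ → Matrix m m ℝ} {x : ℝ → m → ℝ} {s : k → ℝ}
    (hR : IsUnit R.det) (hRs : R.IsSymm) (hPs : (P t).IsSymm) (hP : HasDerivAt P P' t)
    (hric : ρ • P t = P' + Aᵀ * P t + P t * A + Q - P t * B * R⁻¹ * Bᵀ * P t)
    (hx : HasDerivAt x (A *ᵥ x t + B *ᵥ s) t) :
    HasDerivAt (fun τ => Real.exp (-ρ * τ) * (x τ ⬝ᵥ P τ *ᵥ x τ))
      (Real.exp (-ρ * t) * ((s + (R⁻¹ * Bᵀ * P t) *ᵥ x t) ⬝ᵥ R *ᵥ (s + (R⁻¹ * Bᵀ * P t) *ᵥ x t)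
        - (x t ⬝ᵥ Q *ᵥ x t + s ⬝ᵥ R *ᵥ s))) t := by
  have hexp : HasDerivAt (fun τ => Real.exp (-ρ * τ)) (Real.exp (-ρ * t) * -ρ) t := by
    simpa using ((hasDerivAt_id t).const_mul (-ρ)).exp
  refine (hexp.mul (hx.dotProduct (hP.matrix_mulVec hx))).congr_deriv ?_
  rw [← riccati_completion_of_squares hR hRs hPs hric, dotProduct_add]
  ring

theorem hasDerivAt_deviation {m k : Type*} [Fintype m] [Fintype k] {A G : Matrix m m ℝ}
    {B : Matrix m k ℝ} {y yN : ℝ → m → ℝ} {u uN : k → ℝ} {t : ℝ}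
    (hyN : HasDerivAt yN ((A + G) *ᵥ yN t + B *ᵥ uN) t)
    (hy : HasDerivAt y (A *ᵥ y t + G *ᵥ yN t + B *ᵥ u) t) :
    HasDerivAt (fun τ => y τ - yN τ) (A *ᵥ (y t - yN t) + B *ᵥ (u - uN)) t :=
  (hy.sub hyN).congr_deriv (by simp only [mulVec_sub, add_mulVec]; abel)

section MeanField

variable {ι m k : Type*} [Fintype ι] [Fintype m] [Fintype k]

theorem sum_quadForm_sub_mulVec_mean [DecidableEq m] (Q Γ : Matrix m m ℝ) (y : ι → m → ℝ)
    {yN : m → ℝ} (hyN : yN = (Fintype.card ι : ℝ)⁻¹ • ∑ j, y j) :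
    ∑ i, (y i - Γ *ᵥ yN) ⬝ᵥ Q *ᵥ (y i - Γ *ᵥ yN)
      = ∑ i, (y i - yN) ⬝ᵥ Q *ᵥ (y i - yN)
        + Fintype.card ι * (yN ⬝ᵥ ((1 - Γ)ᵀ * Q * (1 - Γ)) *ᵥ yN) := by
  have hdev : ∀ i, y i - Γ *ᵥ yN = (y i - yN) + (1 - Γ) *ᵥ yN := fun i => by
    rw [sub_mulVec, one_mulVec]; abel
  simp only [hdev]
  rw [sum_quadForm_add_of_sum_eq_zero _ _ _
      (by rw [hyN]; exact sum_sub_inv_card_smul_sum_eq_zero y),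
    mulVec_dotProduct, mulVec_mulVec, mulVec_mulVec, Finset.card_univ, nsmul_eq_mul]

theorem hasDerivAt_mean {A G : Matrix m m ℝ} {B : Matrix m k ℝ} {y : ι → ℝ → m → ℝ}
    {u : ι → ℝ → k → ℝ} {yN : ℝ → m → ℝ} {uN : k → ℝ} {t : ℝ}
    (hyN : ∀ τ, yN τ = (Fintype.card ι : ℝ)⁻¹ • ∑ j, y j τ)
    (huN : uN = (Fintype.card ι : ℝ)⁻¹ • ∑ j, u j t)
    (hy : ∀ j, HasDerivAt (y j) (A *ᵥ y j t + G *ᵥ yN t + B *ᵥ u j t) t) :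
    HasDerivAt yN ((A + G) *ᵥ yN t + B *ᵥ uN) t := by
  refine (((HasDerivAt.fun_sum (u := Finset.univ) fun j _ => hy j).fun_const_smul
    (Fintype.card ι : ℝ)⁻¹).congr_of_eventuallyEq (Filter.Eventually.of_forall hyN)).congr_deriv ?_
  -- true also for `c = 0`, i.e. for empty `ι`
  have hinv : ∀ c : ℝ, c⁻¹ * (c * c⁻¹) = c⁻¹ := fun c => by
    simpa [mul_assoc] using mul_inv_mul_cancel c⁻¹
  rw [hyN t, huN]
  simp only [Finset.sum_add_distrib, ← mulVec_sum, Finset.sum_const, Finset.card_univ,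
    ← Nat.cast_smul_eq_nsmul ℝ, smul_add, mulVec_smul, add_mulVec, smul_smul]
  rw [hinv]

end MeanField

theorem integral_eq_integral_of_hasDerivAt_sub {f g V : ℝ → ℝ} {a b : ℝ}
    (hV : ∀ t ∈ Set.uIcc a b, HasDerivAt V (f t - g t) t) (hf : IntervalIntegrable f volume a b)
    (hg : IntervalIntegrable g volume a b) (hab : V a = V b) :
    ∫ t in a..b, f t = ∫ t in a..b, g t := by
  have := integral_eq_sub_of_hasDerivAt hV (hf.sub hg)
  rwa [integral_sub hf hg, hab, sub_self, sub_eq_zero] at this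

theorem completion_of_squares_social_cost_general
    (n r N : ℕ) (ρ T : ℝ)
    (A G Γ Q : Matrix (Fin n) (Fin n) ℝ)
    (B : Matrix (Fin n) (Fin r) ℝ) (R : Matrix (Fin r) (Fin r) ℝ)
    (hR : R.PosDef) (hRs : R.IsSymm)
    (P Pi : ℝ → Matrix (Fin n) (Fin n) ℝ)
    (P' Pi' : ℝ → Matrix (Fin n) (Fin n) ℝ)
    (hPderiv : ∀ t, HasDerivAt P (P' t) t)
    (hPiDeriv : ∀ t, HasDerivAt Pi (Pi' t) t)
    (hPsymm : ∀ t, (P t).IsSymm) (hPiSymm : ∀ t, (Pi t).IsSymm)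
    (hPric : ∀ t, ρ • P t = P' t + Aᵀ * P t + P t * A + Q - P t * B * R⁻¹ * Bᵀ * P t)
    (hPT : P T = 0)
    (hPiric : ∀ t, ρ • Pi t = Pi' t + (A + G)ᵀ * Pi t + Pi t * (A + G)
        - Pi t * B * R⁻¹ * Bᵀ * Pi t + (1 - Γ)ᵀ * Q * (1 - Γ))
    (hPiT : Pi T = 0)
    (u : Fin N → ℝ → (Fin r → ℝ)) (hu : ∀ i, Continuous (u i))
    (y : Fin N → ℝ → (Fin n → ℝ))
    (yN : ℝ → (Fin n → ℝ)) (hyN : ∀ t, yN t = (N : ℝ)⁻¹ • ∑ j, y j t)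
    (uN : ℝ → (Fin r → ℝ)) (huN : ∀ t, uN t = (N : ℝ)⁻¹ • ∑ j, u j t)
    (hyode : ∀ i t, HasDerivAt (y i)
        (A.mulVec (y i t) + G.mulVec (yN t) + B.mulVec (u i t)) t)
    (hy0 : ∀ i, y i 0 = 0) :
    ∑ i, ∫ t in (0:ℝ)..T, Real.exp (-ρ * t) *
        ((y i t - Γ.mulVec (yN t)) ⬝ᵥ Q.mulVec (y i t - Γ.mulVec (yN t))
          + (u i t) ⬝ᵥ R.mulVec (u i t))
      = ∑ i, ∫ t in (0:ℝ)..T, Real.exp (-ρ * t) *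
        ((u i t - uN t + (R⁻¹ * Bᵀ * P t).mulVec (y i t - yN t)) ⬝ᵥ
            R.mulVec (u i t - uN t + (R⁻¹ * Bᵀ * P t).mulVec (y i t - yN t))
          + (uN t + (R⁻¹ * Bᵀ * Pi t).mulVec (yN t)) ⬝ᵥ
            R.mulVec (uN t + (R⁻¹ * Bᵀ * Pi t).mulVec (yN t))) := by
  have hRdet : IsUnit R.det := hR.det_pos.ne'.isUnit
  have hyN_card : ∀ t, yN t = (Fintype.card (Fin N) : ℝ)⁻¹ • ∑ j, y j t := by simpa using hyN
  have huN_card : ∀ t, uN t = (Fintype.card (Fin N) : ℝ)⁻¹ • ∑ j, u j t := by simpa using huN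
  have hyNode : ∀ t, HasDerivAt yN ((A + G) *ᵥ yN t + B *ᵥ uN t) t := fun t =>
    hasDerivAt_mean hyN_card (huN_card t) fun j => hyode j t
  have hy : ∀ i, Continuous (y i) := fun i =>
    continuous_iff_continuousAt.2 fun t => (hyode i t).continuousAt
  have hP : Continuous P := continuous_iff_continuousAt.2 fun t => (hPderiv t).continuousAt
  have hPi : Continuous Pi := continuous_iff_continuousAt.2 fun t => (hPiDeriv t).continuousAt
  have hyNc : Continuous yN := by rw [funext hyN]; fun_prop
  have huNc : Continuous uN := by rw [funext huN]; fun_prop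
  rw [← integral_finsetSum fun i _ => Continuous.intervalIntegrable (by fun_prop) _ _,
    ← integral_finsetSum fun i _ => Continuous.intervalIntegrable (by fun_prop) _ _]
  refine (integral_eq_integral_of_hasDerivAt_sub (V := fun τ => ∑ i, Real.exp (-ρ * τ) *
      ((y i τ - yN τ) ⬝ᵥ P τ *ᵥ (y i τ - yN τ)) + N * (Real.exp (-ρ * τ) * (yN τ ⬝ᵥ Pi τ *ᵥ yN τ)))
    (fun t _ => ?_) (Continuous.intervalIntegrable (by fun_prop) _ _)
    (Continuous.intervalIntegrable (by fun_prop) _ _) (by simp [hPT, hPiT, hy0, hyN])).symm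
  refine ((HasDerivAt.fun_sum fun i _ => hasDerivAt_discounted_quadForm_of_riccati hRdet hRs
    (hPsymm t) (hPderiv t) (hPric t) (hasDerivAt_deviation (hyNode t) (hyode i t))).add
    ((hasDerivAt_discounted_quadForm_of_riccati (Q := (1 - Γ)ᵀ * Q * (1 - Γ)) hRdet hRs
      (hPiSymm t) (hPiDeriv t) (by rw [hPiric t]; abel) (hyNode t)).const_mul (N : ℝ))).congr_deriv
    ?_
  have hQsplit := sum_quadForm_sub_mulVec_mean Q Γ (y · t) (hyN_card t)
  have hRsplit := sum_quadForm_sub_mulVec_mean R 0 (u · t) (huN_card t)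
  simp only [zero_mulVec, sub_zero, transpose_one, Matrix.mul_one, Matrix.one_mul,
    Fintype.card_fin] at hQsplit hRsplit
  simp only [← Finset.mul_sum, Finset.sum_add_distrib, Finset.sum_sub_distrib, Finset.sum_const,
    Finset.card_univ, Fintype.card_fin, nsmul_eq_mul, hQsplit, hRsplit]
  ring

theorem completion_of_squares_social_cost
    (n r N : ℕ) (ρ T : ℝ) (hT : 0 < T)
    (A G Γ Q : Matrix (Fin n) (Fin n) ℝ) (hQ : Q.IsSymm)
    (B : Matrix (Fin n) (Fin r) ℝ) (R : Matrix (Fin r) (Fin r) ℝ)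
    (hR : R.PosDef) (hRs : R.IsSymm)
    (P Pi : ℝ → Matrix (Fin n) (Fin n) ℝ)
    (P' Pi' : ℝ → Matrix (Fin n) (Fin n) ℝ)
    (hPderiv : ∀ t, HasDerivAt P (P' t) t)
    (hPiDeriv : ∀ t, HasDerivAt Pi (Pi' t) t)
    (hPsymm : ∀ t, (P t).IsSymm) (hPiSymm : ∀ t, (Pi t).IsSymm)
    (hPric : ∀ t, ρ • P t = P' t + Aᵀ * P t + P t * A + Q - P t * B * R⁻¹ * Bᵀ * P t)
    (hPT : P T = 0)
    (hPiric : ∀ t, ρ • Pi t = Pi' t + (A + G)ᵀ * Pi t + Pi t * (A + G)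
        - Pi t * B * R⁻¹ * Bᵀ * Pi t + (1 - Γ)ᵀ * Q * (1 - Γ))
    (hPiT : Pi T = 0)
    (u : Fin N → ℝ → (Fin r → ℝ)) (hu : ∀ i, Continuous (u i))
    (y : Fin N → ℝ → (Fin n → ℝ))
    (yN : ℝ → (Fin n → ℝ)) (hyN : ∀ t, yN t = (N : ℝ)⁻¹ • ∑ j, y j t)
    (uN : ℝ → (Fin r → ℝ)) (huN : ∀ t, uN t = (N : ℝ)⁻¹ • ∑ j, u j t)
    (hyode : ∀ i t, HasDerivAt (y i)
        (A.mulVec (y i t) + G.mulVec (yN t) + B.mulVec (u i t)) t)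
    (hy0 : ∀ i, y i 0 = 0) :
    ∑ i, ∫ t in (0:ℝ)..T, Real.exp (-ρ * t) *
        ((y i t - Γ.mulVec (yN t)) ⬝ᵥ Q.mulVec (y i t - Γ.mulVec (yN t))
          + (u i t) ⬝ᵥ R.mulVec (u i t))
      = ∑ i, ∫ t in (0:ℝ)..T, Real.exp (-ρ * t) *
        ((u i t - uN t + (R⁻¹ * Bᵀ * P t).mulVec (y i t - yN t)) ⬝ᵥ
            R.mulVec (u i t - uN t + (R⁻¹ * Bᵀ * P t).mulVec (y i t - yN t))
          + (uN t + (R⁻¹ * Bᵀ * Pi t).mulVec (yN t)) ⬝ᵥ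
            R.mulVec (uN t + (R⁻¹ * Bᵀ * Pi t).mulVec (yN t))) :=
  completion_of_squares_social_cost_general n r N ρ T A G Γ Q B R hR hRs P Pi P' Pi' hPderiv
    hPiDeriv hPsymm hPiSymm hPric hPT hPiric hPiT u hu y yN hyN uN huN hyode hy0
end

section
/- Necessity of stability from weighted integrability for all initial conditions: let M be a real n×n matrix and ρ > 0. If for every x₀ ∈ ℝⁿ the function x(t) = e^{Mt}x₀ satisfies ∫₀^∞ e^{−ρt}‖x(t)‖² dt < ∞, then M − (ρ/2)I is Hurwitz. -/
/-!
If `z` is a spectral value of `M - (ρ/2)I` with `Re z ≥ 0`, then `μ = z + ρ/2` is an eigenvalue of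
`M` with a complex eigenvector `v = x + iy`. Since `M` is real, `e^{tM}x + i e^{tM}y = e^{tμ}v`, so
`2 e^{-ρt}(‖e^{tM}x‖² + ‖e^{tM}y‖²) ≥ e^{2t Re z}‖v‖² ≥ ‖v‖²`, which is not integrable on `[0, ∞)`.
-/

open Matrix MeasureTheory

namespace Matrix

variable {m : Type*} [Fintype m]

theorem exists_mulVec_eq_smul_of_mem_spectrum [DecidableEq m] {K : Type*} [Field K]
    {A : Matrix m m K} {μ : K} (hμ : μ ∈ spectrum K A) : ∃ v ≠ 0, A *ᵥ v = μ • v := by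
  rw [← spectrum_toLin', ← Module.End.hasEigenvalue_iff_mem_spectrum] at hμ
  obtain ⟨v, hv⟩ := hμ.exists_hasEigenvector
  exact ⟨v, hv.2, by simpa only [toLin'_apply] using hv.apply_eq_smul⟩

section exp

variable [DecidableEq m]

attribute [local instance] Matrix.linftyOpNormedRing Matrix.linftyOpNormedAlgebra

theorem exp_mulVec_of_mulVec_eq_smul {𝕂 : Type*} [RCLike 𝕂] {A : Matrix m m 𝕂} {v : m → 𝕂}
    {μ : 𝕂} (h : A *ᵥ v = μ • v) : NormedSpace.exp A *ᵥ v = NormedSpace.exp μ • v := by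
  have hpow (k : ℕ) : A ^ k *ᵥ v = μ ^ k • v := by
    induction k with
    | zero => simp
    | succ k ih => rw [pow_succ', ← mulVec_mulVec, ih, mulVec_smul, h, smul_smul, pow_succ]
  let applyTo : Matrix m m 𝕂 →+ (m → 𝕂) := AddMonoidHom.mk' (· *ᵥ v) (add_mulVec · · v)
  have hcont : Continuous applyTo := continuous_id.matrix_mulVec continuous_const
  have hA := (NormedSpace.exp_series_hasSum_exp' (𝕂 := 𝕂) A).map applyTo hcont
  have hμ := (NormedSpace.exp_series_hasSum_exp' (𝕂 := 𝕂) μ).smul_const v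
  refine hA.unique (hμ.congr_fun fun k => ?_)
  simp [applyTo, smul_mulVec, hpow, smul_smul]

theorem exp_map_ofReal (B : Matrix m m ℝ) :
    (NormedSpace.exp B).map Complex.ofReal = NormedSpace.exp (B.map Complex.ofReal) :=
  NormedSpace.map_exp Complex.ofRealHom.mapMatrix
    (by exact continuous_id.matrix_map Complex.continuous_ofReal) B

end exp

theorem re_map_ofReal_mulVec (E : Matrix m m ℝ) (v : m → ℂ) (i : m) :
    ((E.map Complex.ofReal *ᵥ v) i).re = (E *ᵥ fun j => (v j).re) i := by
  simp [mulVec, dotProduct, Complex.re_sum]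

theorem im_map_ofReal_mulVec (E : Matrix m m ℝ) (v : m → ℂ) (i : m) :
    ((E.map Complex.ofReal *ᵥ v) i).im = (E *ᵥ fun j => (v j).im) i := by
  simp [mulVec, dotProduct, Complex.im_sum]

theorem norm_map_ofReal_mulVec_le (E : Matrix m m ℝ) (v : m → ℂ) :
    ‖E.map Complex.ofReal *ᵥ v‖ ≤ ‖E *ᵥ fun j => (v j).re‖ + ‖E *ᵥ fun j => (v j).im‖ := by
  refine (pi_norm_le_iff_of_nonneg (by positivity)).2 fun i => ?_
  calc ‖(E.map Complex.ofReal *ᵥ v) i‖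
      ≤ |((E.map Complex.ofReal *ᵥ v) i).re| + |((E.map Complex.ofReal *ᵥ v) i).im| :=
        Complex.norm_le_abs_re_add_abs_im _
    _ ≤ _ := by
        rw [re_map_ofReal_mulVec, im_map_ofReal_mulVec]
        exact add_le_add (norm_le_pi_norm (E *ᵥ _) i) (norm_le_pi_norm (E *ᵥ _) i)

theorem exp_mul_re_mul_norm_le_of_mulVec_eq_smul [DecidableEq m] {M : Matrix m m ℝ} {v : m → ℂ}
    {μ : ℂ} (hv : M.map Complex.ofReal *ᵥ v = μ • v) (t : ℝ) :
    Real.exp (t * μ.re) * ‖v‖ ≤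
      ‖NormedSpace.exp (t • M) *ᵥ fun j => (v j).re‖ +
        ‖NormedSpace.exp (t • M) *ᵥ fun j => (v j).im‖ := by
  have htv : (t • M).map Complex.ofReal *ᵥ v = ((t : ℂ) * μ) • v := by
    rw [show (t • M).map Complex.ofReal = (t : ℂ) • M.map Complex.ofReal by ext; simp,
      smul_mulVec, hv, smul_smul]
  calc Real.exp (t * μ.re) * ‖v‖ = ‖(NormedSpace.exp (t • M)).map Complex.ofReal *ᵥ v‖ := by
        rw [exp_map_ofReal, exp_mulVec_of_mulVec_eq_smul htv, ← Complex.exp_eq_exp_ℂ, norm_smul,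
          Complex.norm_exp]
        simp
    _ ≤ _ := norm_map_ofReal_mulVec_le _ v

end Matrix

theorem not_integrableOn_Ici_of_le {f : ℝ → ℝ} {a c : ℝ} (hc : 0 < c)
    (hf : ∀ t ∈ Set.Ici a, c ≤ f t) : ¬ IntegrableOn f (Set.Ici a) := by
  intro hint
  have hconst : IntegrableOn (fun _ => c) (Set.Ici a) :=
    hint.mono' aestronglyMeasurable_const <| (ae_restrict_iff' measurableSet_Ici).2 <|
      ae_of_all _ fun t ht => by rw [Real.norm_of_nonneg hc.le]; exact hf t ht
  rw [integrableOn_const_iff, Real.volume_Ici] at hconst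
  simp [hc.ne'] at hconst

theorem weighted_integrability_implies_hurwitz_general (n : ℕ) (ρ : ℝ)
    (M : Matrix (Fin n) (Fin n) ℝ)
    (h : ∀ x₀ : Fin n → ℝ, IntegrableOn
        (fun t => Real.exp (-ρ * t) * ‖(NormedSpace.exp (t • M)).mulVec x₀‖^2)
        (Set.Ici 0)) :
    ∀ z ∈ spectrum ℂ
        ((M - (ρ/2) • (1 : Matrix (Fin n) (Fin n) ℝ)).map Complex.ofReal), z.re < 0 := by
  intro z hz
  by_contra! hre
  have hshift : z + (ρ / 2 : ℝ) ∈ spectrum ℂ (M.map Complex.ofReal) := by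
    rw [spectrum.add_mem_iff]
    convert hz using 2
    ext i j
    by_cases hij : i = j <;> simp [hij, Algebra.algebraMap_eq_smul_one]
    ring
  obtain ⟨v, hv0, hv⟩ := exists_mulVec_eq_smul_of_mem_spectrum hshift
  refine not_integrableOn_Ici_of_le (c := ‖v‖ ^ 2) (pow_pos (norm_pos_iff.2 hv0) 2) (fun t ht => ?_)
    (((h fun j => (v j).re).add (h fun j => (v j).im)).const_mul 2)
  set a := ‖NormedSpace.exp (t • M) *ᵥ fun j => (v j).re‖
  set b := ‖NormedSpace.exp (t • M) *ᵥ fun j => (v j).im‖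
  have hab := exp_mul_re_mul_norm_le_of_mulVec_eq_smul hv t
  have hgrowth : 1 ≤ Real.exp (-ρ * t) * Real.exp (t * (z + (ρ / 2 : ℝ)).re) ^ 2 := by
    have hexponent : -ρ * t + (2 : ℕ) * (t * (z + (ρ / 2 : ℝ)).re) = 2 * t * z.re := by
      simp only [Complex.add_re, Complex.ofReal_re]
      ring
    rw [← Real.exp_nat_mul, ← Real.exp_add, hexponent]
    exact Real.one_le_exp (mul_nonneg (mul_nonneg zero_le_two ht) hre)
  calc ‖v‖ ^ 2 ≤ Real.exp (-ρ * t) * (Real.exp (t * (z + (ρ / 2 : ℝ)).re) * ‖v‖) ^ 2 := by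
        rw [mul_pow, ← mul_assoc]
        exact le_mul_of_one_le_left (by positivity) hgrowth
    _ ≤ Real.exp (-ρ * t) * (a + b) ^ 2 := by gcongr
    _ ≤ 2 * (Real.exp (-ρ * t) * a ^ 2 + Real.exp (-ρ * t) * b ^ 2) := by
        nlinarith [sq_nonneg (a - b), Real.exp_pos (-ρ * t)]

theorem weighted_integrability_implies_hurwitz (n : ℕ) (ρ : ℝ) (hρ : 0 < ρ)
    (M : Matrix (Fin n) (Fin n) ℝ)
    (h : ∀ x₀ : Fin n → ℝ, IntegrableOn
        (fun t => Real.exp (-ρ * t) * ‖(NormedSpace.exp (t • M)).mulVec x₀‖^2)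
        (Set.Ici 0)) :
    ∀ z ∈ spectrum ℂ
        ((M - (ρ/2) • (1 : Matrix (Fin n) (Fin n) ℝ)).map Complex.ofReal), z.re < 0 :=
  weighted_integrability_implies_hurwitz_general n ρ M h
end
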